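/- Suppose α_j² = 0 in R_A for every j = 1,…,n. Then the ℚ-algebra homomorphism ℚ[y_1,…,y_n]/(y_j² : j = 1,…,n) → R_A ⊗ ℚ determined by y_j ↦ x_j − α_j/2 is a well-defined ring isomorphism, and it carries the ℚ-span of y_1,…,y_n onto the ℚ-span of x_1,…,x_n. In particular, the rational cohomology ring of the Bott manifold associated to A is isomorphic as a graded ring to that of (ℂP¹)ⁿ (i.e., the Bott manifold is ℚ-trivial). -/

import Mathlib

/-!
Put `z_j = x_j - α_j / 2`. In `R_A ⊗ ℚ` we have `x_j² = α_j x_j`, hence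
`z_j² = x_j² - α_j x_j + α_j² / 4 = α_j² / 4`, which vanishes because `α_j² = 0` already in
`R_A`; so `y_j ↦ z_j` is a well-defined algebra map `ℚ[y]/(y²) → R_A ⊗ ℚ`. As
`z_j ≡ x_j` modulo the span of `x_1, …, x_{j-1}`, the `z_j` span the same space as the `x_j`,
which generate `R_A ⊗ ℚ`; so the map is onto. It is injective by counting dimensions: the source
is spanned by the `2ⁿ` square-free monomials `y_S`, while the square-free monomials `x_S` are
linearly independent in `R_A ⊗ ℚ`. For the latter, let `x_j` act on the free module on the
subsets `S` of `{1, …, n}` by `x_j · e_S = e_{S ∪ {j}}` for `j ∉ S` and `x_j · e_S = α_j · e_S`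
for `j ∈ S`; by induction on the indices these operators commute and satisfy the relations of
`R_A ⊗ ℚ`, and `x_S · e_∅ = e_S`.
-/

open MvPolynomial

noncomputable section

def alphaP (n : ℕ) (A : Fin n → Fin n → ℤ) (j : Fin n) : MvPolynomial (Fin n) ℤ :=
  ∑ i ∈ Finset.univ.filter (· < j), C (A i j) * X i

def bottIdeal (n : ℕ) (A : Fin n → Fin n → ℤ) : Ideal (MvPolynomial (Fin n) ℤ) :=
  Ideal.span (Set.range fun j => X j ^ 2 - alphaP n A j * X j)

abbrev BottRing (n : ℕ) (A : Fin n → Fin n → ℤ) : Type :=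
  MvPolynomial (Fin n) ℤ ⧸ bottIdeal n A

/-- The image of α_j in R_A. -/
def balpha (n : ℕ) (A : Fin n → Fin n → ℤ) (j : Fin n) : BottRing n A :=
  Ideal.Quotient.mk (bottIdeal n A) (alphaP n A j)

/-- α_j with rational coefficients. -/
def alphaQ (n : ℕ) (A : Fin n → Fin n → ℤ) (j : Fin n) : MvPolynomial (Fin n) ℚ :=
  ∑ i ∈ Finset.univ.filter (· < j), C ((A i j : ℚ)) * X i

def bottIdealQ (n : ℕ) (A : Fin n → Fin n → ℤ) : Ideal (MvPolynomial (Fin n) ℚ) :=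
  Ideal.span (Set.range fun j => X j ^ 2 - alphaQ n A j * X j)

/-- R_A ⊗ ℚ = ℚ[x_1,…,x_n]/(x_j² − α_j x_j), the rational cohomology ring. -/
abbrev BottRingQ (n : ℕ) (A : Fin n → Fin n → ℤ) : Type :=
  MvPolynomial (Fin n) ℚ ⧸ bottIdealQ n A

/-- The image x_i of X i in R_A ⊗ ℚ. -/
def bxQ (n : ℕ) (A : Fin n → Fin n → ℤ) (i : Fin n) : BottRingQ n A :=
  Ideal.Quotient.mk (bottIdealQ n A) (X i)

/-- The image of α_j in R_A ⊗ ℚ. -/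
def balphaQ (n : ℕ) (A : Fin n → Fin n → ℤ) (j : Fin n) : BottRingQ n A :=
  Ideal.Quotient.mk (bottIdealQ n A) (alphaQ n A j)

/-- ℚ[y_1,…,y_n]/(y_j²), the rational cohomology ring of (ℂP¹)ⁿ. -/
abbrev CPRing (n : ℕ) : Type :=
  MvPolynomial (Fin n) ℚ ⧸ Ideal.span (Set.range fun j : Fin n => (X j : MvPolynomial (Fin n) ℚ) ^ 2)

/-- The image y_i of X i in ℚ[y]/(y²). -/
def cy (n : ℕ) (i : Fin n) : CPRing n :=
  Ideal.Quotient.mk _ (X i)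

section BottMulX

variable {R : Type*} [CommRing R] {n : ℕ} (a : Fin n → Fin n → R)

/-- `Finsupp.single S 1` stands for the square-free monomial `x_S`; for `j ∈ S` the rule
`x_j x_S = α_j x_S` with `α_j = ∑_{i<j} a i j x_i` recurses on smaller indices. -/
def bottMulX : Fin n → Module.End R (Finset (Fin n) →₀ R)
  | j => Finsupp.linearCombination R fun S =>
      if j ∈ S then
        ∑ i ∈ (Finset.univ.filter (· < j)).attach, a i j • bottMulX i (Finsupp.single S 1)
      else Finsupp.single (insert j S) 1
  termination_by j => j.val
  decreasing_by exact (Finset.mem_filter.mp i.2).2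

variable {a}

theorem bottMulX_single_of_notMem {j : Fin n} {S : Finset (Fin n)} (h : j ∉ S) :
    bottMulX a j (Finsupp.single S 1) = Finsupp.single (insert j S) 1 := by
  rw [bottMulX, Finsupp.linearCombination_single, one_smul, if_neg h]

theorem bottMulX_single_of_mem {j : Fin n} {S : Finset (Fin n)} (h : j ∈ S) :
    bottMulX a j (Finsupp.single S 1) =
      ∑ i ∈ Finset.univ.filter (· < j), a i j • bottMulX a i (Finsupp.single S 1) := by
  rw [bottMulX, Finsupp.linearCombination_single, one_smul, if_pos h,
    Finset.sum_attach _ fun i => a i j • bottMulX a i (Finsupp.single S 1)]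

theorem bottMulX_commute_of_forall_lt {i j : Fin n} (hij : i < j)
    (below : ∀ k < j, ∀ l < j, Commute (bottMulX a k) (bottMulX a l))
    (ih : ∀ l < i, Commute (bottMulX a l) (bottMulX a j)) :
    Commute (bottMulX a i) (bottMulX a j) := by
  have swap {k l : Fin n} (hk : k < j) (hl : l < j) (v : Finset (Fin n) →₀ R) :
      bottMulX a k (bottMulX a l v) = bottMulX a l (bottMulX a k v) :=
    LinearMap.congr_fun (below k hk l hl).eq v
  have lt_of_mem {k l : Fin n} (hk : k ∈ Finset.univ.filter (· < l)) : k < l :=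
    (Finset.mem_filter.mp hk).2
  refine Finsupp.basisSingleOne.ext fun S => ?_
  simp only [Finsupp.coe_basisSingleOne, Module.End.mul_apply]
  by_cases hj : j ∈ S <;> by_cases hi : i ∈ S
  · calc bottMulX a i (bottMulX a j (Finsupp.single S 1))
        = ∑ k ∈ Finset.univ.filter (· < j), ∑ l ∈ Finset.univ.filter (· < i),
            a k j • a l i • bottMulX a k (bottMulX a l (Finsupp.single S 1)) := by
          rw [bottMulX_single_of_mem hj, map_sum]
          refine Finset.sum_congr rfl fun k hk => ?_
          rw [map_smul, swap hij (lt_of_mem hk), bottMulX_single_of_mem hi, map_sum,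
            Finset.smul_sum]
          simp only [map_smul]
      _ = bottMulX a j (bottMulX a i (Finsupp.single S 1)) := by
          rw [bottMulX_single_of_mem hi, map_sum, Finset.sum_comm]
          refine Finset.sum_congr rfl fun l hl => ?_
          rw [map_smul, ← Module.End.mul_apply, ← (ih l (lt_of_mem hl)).eq, Module.End.mul_apply,
            bottMulX_single_of_mem hj, map_sum, Finset.smul_sum]
          refine Finset.sum_congr rfl fun k hk => ?_
          rw [map_smul, smul_comm, swap (lt_of_mem hk) ((lt_of_mem hl).trans hij)]
  · rw [bottMulX_single_of_mem hj, bottMulX_single_of_notMem hi,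
      bottMulX_single_of_mem (Finset.mem_insert_of_mem hj), map_sum]
    refine Finset.sum_congr rfl fun k hk => ?_
    rw [map_smul, swap hij (lt_of_mem hk), bottMulX_single_of_notMem hi]
  · rw [bottMulX_single_of_notMem hj, bottMulX_single_of_mem (Finset.mem_insert_of_mem hi),
      bottMulX_single_of_mem hi, map_sum]
    refine Finset.sum_congr rfl fun l hl => ?_
    rw [map_smul, ← bottMulX_single_of_notMem hj, ← Module.End.mul_apply,
      (ih l (lt_of_mem hl)).eq, Module.End.mul_apply]
  · rw [bottMulX_single_of_notMem hj, bottMulX_single_of_notMem hi,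
      bottMulX_single_of_notMem (by simp [hij.ne, hi]),
      bottMulX_single_of_notMem (by simp [hij.ne', hj]), Finset.insert_comm]

theorem bottMulX_commute (i j : Fin n) : Commute (bottMulX a i) (bottMulX a j) := by
  suffices key : ∀ j, ∀ i < j, Commute (bottMulX a i) (bottMulX a j) by
    rcases lt_trichotomy i j with h | rfl | h
    exacts [key j i h, Commute.refl _, (key i j h).symm]
  intro j
  induction j using WellFoundedLT.induction with | _ j ihj => ?_
  have below : ∀ k < j, ∀ l < j, Commute (bottMulX a k) (bottMulX a l) := by
    intro k hk l hl
    rcases lt_trichotomy k l with h | rfl | h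
    exacts [ihj l hl k h, Commute.refl _, (ihj k hk l h).symm]
  intro i hij
  induction i using WellFoundedLT.induction with | _ i ihi => ?_
  exact bottMulX_commute_of_forall_lt hij below fun l hl => ihi l hl (hl.trans hij)

theorem bottMulX_mul_self (j : Fin n) :
    bottMulX a j * bottMulX a j =
      (∑ i ∈ Finset.univ.filter (· < j), a i j • bottMulX a i) * bottMulX a j := by
  refine Finsupp.basisSingleOne.ext fun S => ?_
  simp only [Finsupp.coe_basisSingleOne, Module.End.mul_apply, LinearMap.coe_sum,
    Finset.sum_apply, LinearMap.smul_apply]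
  by_cases hj : j ∈ S
  · conv_lhs => rw [bottMulX_single_of_mem hj, map_sum]
    refine Finset.sum_congr rfl fun i _ => ?_
    rw [map_smul, ← Module.End.mul_apply, bottMulX_commute, Module.End.mul_apply]
  · rw [bottMulX_single_of_notMem hj, bottMulX_single_of_mem (Finset.mem_insert_self j S)]

open scoped IsMulCommutative

instance : IsMulCommutative (Algebra.adjoin R (Set.range (bottMulX a))) :=
  Algebra.isMulCommutative_adjoin R <| by
    rintro _ ⟨i, rfl⟩ _ ⟨j, rfl⟩
    exact bottMulX_commute i j

variable (a) in
def aevalBottMulX : MvPolynomial (Fin n) R →ₐ[R] Module.End R (Finset (Fin n) →₀ R) :=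
  (Algebra.adjoin R (Set.range (bottMulX a))).val.comp
    (aeval fun j => ⟨bottMulX a j, Algebra.subset_adjoin ⟨j, rfl⟩⟩)

@[simp]
theorem aevalBottMulX_X (j : Fin n) : aevalBottMulX a (X j) = bottMulX a j := by
  simp [aevalBottMulX]

theorem aevalBottMulX_relation (j : Fin n) :
    aevalBottMulX a (X j ^ 2 - (∑ i ∈ Finset.univ.filter (· < j), C (a i j) * X i) * X j) = 0 := by
  simp [sq, bottMulX_mul_self, Algebra.smul_def]

theorem aevalBottMulX_prod_X_single {S T : Finset (Fin n)} (h : Disjoint S T) :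
    aevalBottMulX a (∏ i ∈ S, X i) (Finsupp.single T 1) = Finsupp.single (S ∪ T) 1 := by
  induction S using Finset.induction_on with
  | empty => simp
  | insert k S hk ih =>
    rw [Finset.disjoint_insert_left] at h
    rw [Finset.prod_insert hk, map_mul, Module.End.mul_apply, ih h.2, aevalBottMulX_X,
      bottMulX_single_of_notMem (by simp [hk, h.1]), Finset.insert_union]

theorem linearIndependent_mk_prod_X {I : Ideal (MvPolynomial (Fin n) R)}
    (hI : I ≤ RingHom.ker (aevalBottMulX a)) :
    LinearIndependent R fun S : Finset (Fin n) => Ideal.Quotient.mk I (∏ i ∈ S, X i) := by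
  let eval : (MvPolynomial (Fin n) R ⧸ I) →ₗ[R] Finset (Fin n) →₀ R :=
    LinearMap.applyₗ (Finsupp.single ∅ 1) ∘ₗ
      (Ideal.Quotient.liftₐ I (aevalBottMulX a) fun _ hp => RingHom.mem_ker.mp (hI hp)).toLinearMap
  refine LinearIndependent.of_comp eval ?_
  convert Finsupp.basisSingleOne.linearIndependent (R := R) (ι := Finset (Fin n))
  ext1 S
  have key := aevalBottMulX_prod_X_single (a := a) (Finset.disjoint_empty_right S)
  rw [Finset.union_empty] at key
  exact key

end BottMulX

section SqZero

variable {R σ : Type*} [CommRing R]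

abbrev sqZeroIdeal (R σ : Type*) [CommRing R] : Ideal (MvPolynomial σ R) :=
  Ideal.span (Set.range fun j : σ => (X j : MvPolynomial σ R) ^ 2)

theorem mk_X_mul_prod_X [DecidableEq σ] (j : σ) (S : Finset σ) :
    Ideal.Quotient.mk (sqZeroIdeal R σ) (X j * ∏ i ∈ S, X i) =
      if j ∈ S then 0 else Ideal.Quotient.mk (sqZeroIdeal R σ) (∏ i ∈ insert j S, X i) := by
  split_ifs with h
  · rw [Ideal.Quotient.eq_zero_iff_mem, ← Finset.mul_prod_erase S _ h, ← mul_assoc, ← sq]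
    exact Ideal.mul_mem_right _ _ (Ideal.subset_span ⟨j, rfl⟩)
  · rw [Finset.prod_insert h]

theorem span_range_mk_prod_X_eq_top [DecidableEq σ] :
    Submodule.span R (Set.range fun S : Finset σ =>
      Ideal.Quotient.mk (sqZeroIdeal R σ) (∏ i ∈ S, X i)) = ⊤ := by
  set N := Submodule.span R (Set.range fun S : Finset σ =>
      Ideal.Quotient.mk (sqZeroIdeal R σ) (∏ i ∈ S, X i))
  have X_mul_mem (j : σ) {z} (hz : z ∈ N) : Ideal.Quotient.mk _ (X j) * z ∈ N := by
    induction hz using Submodule.span_induction with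
    | mem _ hz =>
      obtain ⟨S, rfl⟩ := hz
      rw [← map_mul, mk_X_mul_prod_X]
      split_ifs
      exacts [N.zero_mem, Submodule.subset_span ⟨_, rfl⟩]
    | zero => rw [mul_zero]; exact N.zero_mem
    | add _ _ _ _ hx hy => simpa [mul_add] using N.add_mem hx hy
    | smul c _ _ hx => simpa [mul_smul_comm] using N.smul_mem c hx
  refine Submodule.eq_top_iff'.2 fun z => ?_
  obtain ⟨p, rfl⟩ := Ideal.Quotient.mk_surjective z
  induction p using MvPolynomial.induction_on with
  | C r =>
    have hC : Ideal.Quotient.mk (sqZeroIdeal R σ) (C r) =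
        r • Ideal.Quotient.mk (sqZeroIdeal R σ) (∏ i ∈ ∅, X i) := by
      rw [Finset.prod_empty, map_one, ← MvPolynomial.algebraMap_eq, Ideal.Quotient.mk_algebraMap,
        Algebra.algebraMap_eq_smul_one]
    rw [hC]
    exact N.smul_mem r (Submodule.subset_span ⟨∅, rfl⟩)
  | add p q hp hq => simpa using N.add_mem hp hq
  | mul_X p j hp => simpa [mul_comm] using X_mul_mem j hp

def sqZeroLift {B : Type*} [CommRing B] [Algebra R B] (b : σ → B) (hb : ∀ j, b j ^ 2 = 0) :
    MvPolynomial σ R ⧸ sqZeroIdeal R σ →ₐ[R] B :=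
  Ideal.Quotient.liftₐ _ (aeval b) fun _ hp =>
    RingHom.mem_ker.mp <| (Ideal.span_le.2 (by rintro _ ⟨j, rfl⟩; simp [hb])) hp

theorem sqZeroLift_mk_X {B : Type*} [CommRing B] [Algebra R B] (b : σ → B)
    (hb : ∀ j, b j ^ 2 = 0) (j : σ) :
    sqZeroLift b hb (Ideal.Quotient.mk (sqZeroIdeal R σ) (X j)) = b j :=
  (Ideal.Quotient.lift_mk _ _ _).trans (aeval_X b j)

end SqZero

theorem Submodule.span_range_sub_sum_smul_lt {K M : Type*} [Ring K] [AddCommGroup M] [Module K M]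
    {n : ℕ} (x : Fin n → M) (c : Fin n → Fin n → K) :
    span K (Set.range fun j => x j - ∑ i ∈ Finset.univ.filter (· < j), c i j • x i) =
      span K (Set.range x) := by
  apply le_antisymm <;> rw [span_le] <;> rintro _ ⟨j, rfl⟩
  · exact sub_mem (subset_span ⟨j, rfl⟩) (sum_mem fun i _ => smul_mem _ _ (subset_span ⟨i, rfl⟩))
  · induction j using WellFoundedLT.induction with | _ j ih => ?_
    rw [← sub_add_cancel (x j) (∑ i ∈ Finset.univ.filter (· < j), c i j • x i)]
    exact add_mem (subset_span ⟨j, rfl⟩)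
      (sum_mem fun i hi => smul_mem _ _ (ih i (Finset.mem_filter.1 hi).2))

section Bott

variable {n : ℕ} (A : Fin n → Fin n → ℤ)

theorem map_alphaP (j : Fin n) :
    MvPolynomial.map (Int.castRingHom ℚ) (alphaP n A j) = alphaQ n A j := by
  simp [alphaP, alphaQ]

def bottRingToQ : BottRing n A →+* BottRingQ n A :=
  Ideal.quotientMap _ (MvPolynomial.map (Int.castRingHom ℚ)) <| Ideal.span_le.2 <| by
    rintro _ ⟨j, rfl⟩
    rw [SetLike.mem_coe, Ideal.mem_comap, map_sub, map_mul, map_pow, map_X, map_alphaP]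
    exact Ideal.subset_span ⟨j, rfl⟩

theorem bottRingToQ_balpha (j : Fin n) : bottRingToQ A (balpha n A j) = balphaQ n A j := by
  show Ideal.Quotient.mk _ (MvPolynomial.map (Int.castRingHom ℚ) (alphaP n A j)) = _
  rw [map_alphaP]
  rfl

theorem bxQ_sq (j : Fin n) : bxQ n A j ^ 2 = balphaQ n A j * bxQ n A j := by
  rw [bxQ, balphaQ, ← map_pow, ← map_mul, Ideal.Quotient.eq]
  exact Ideal.subset_span ⟨j, rfl⟩

theorem balphaQ_eq_sum (j : Fin n) :
    balphaQ n A j = ∑ i ∈ Finset.univ.filter (· < j), (A i j : ℚ) • bxQ n A i := by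
  simp only [balphaQ, alphaQ, bxQ, map_sum, map_mul, ← MvPolynomial.algebraMap_eq,
    Ideal.Quotient.mk_algebraMap]
  exact Finset.sum_congr rfl fun i _ => (Algebra.smul_def (A := BottRingQ n A) _ _).symm

variable {A}

theorem sq_bxQ_sub_half_smul_balphaQ (h : ∀ j, balpha n A j ^ 2 = 0) (j : Fin n) :
    (bxQ n A j - (1 / 2 : ℚ) • balphaQ n A j) ^ 2 = 0 := by
  have hα : balphaQ n A j ^ 2 = 0 := by rw [← bottRingToQ_balpha, ← map_pow, h, map_zero]
  set c := algebraMap ℚ (BottRingQ n A) (1 / 2)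
  have hc : 2 * c = 1 := by rw [← map_ofNat (algebraMap ℚ _) 2, ← map_mul]; norm_num
  rw [Algebra.smul_def (A := BottRingQ n A)]
  linear_combination bxQ_sq A j + c ^ 2 * hα - balphaQ n A j * bxQ n A j * hc

theorem adjoin_range_bxQ : Algebra.adjoin ℚ (Set.range (bxQ n A)) = ⊤ := by
  rw [show Set.range (bxQ n A) = Ideal.Quotient.mkₐ ℚ (bottIdealQ n A) '' Set.range X by
      rw [← Set.range_comp]; rfl,
    Algebra.adjoin_image, adjoin_range_X, Algebra.map_top, AlgHom.range_eq_top]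
  exact Ideal.Quotient.mkₐ_surjective ℚ _

instance : Module.Finite ℚ (CPRing n) :=
  ⟨span_range_mk_prod_X_eq_top (R := ℚ) (σ := Fin n) ▸ Submodule.fg_span (Set.finite_range _)⟩

theorem finrank_CPRing_le_card : Module.finrank ℚ (CPRing n) ≤ Fintype.card (Finset (Fin n)) := by
  have := finrank_range_le_card (R := ℚ) fun S : Finset (Fin n) =>
    Ideal.Quotient.mk (sqZeroIdeal ℚ (Fin n)) (∏ i ∈ S, X i)
  rwa [Set.finrank, span_range_mk_prod_X_eq_top, finrank_top] at this

def qTrivialHom (h : ∀ j, balpha n A j ^ 2 = 0) : CPRing n →ₐ[ℚ] BottRingQ n A :=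
  sqZeroLift (fun j => bxQ n A j - (1 / 2 : ℚ) • balphaQ n A j) (sq_bxQ_sub_half_smul_balphaQ h)

theorem qTrivialHom_cy (h : ∀ j, balpha n A j ^ 2 = 0) (j : Fin n) :
    qTrivialHom h (cy n j) = bxQ n A j - (1 / 2 : ℚ) • balphaQ n A j :=
  sqZeroLift_mk_X _ _ j

theorem map_span_range_cy (h : ∀ j, balpha n A j ^ 2 = 0) :
    (Submodule.span ℚ (Set.range (cy n))).map (qTrivialHom h).toLinearMap =
      Submodule.span ℚ (Set.range (bxQ n A)) := by
  rw [Submodule.map_span, ← Set.range_comp,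
    ← Submodule.span_range_sub_sum_smul_lt (bxQ n A) fun i j => (1 / 2 : ℚ) * A i j]
  congr! 3 with j
  simp [qTrivialHom_cy, balphaQ_eq_sum, Finset.smul_sum, smul_smul]

theorem qTrivialHom_surjective (h : ∀ j, balpha n A j ^ 2 = 0) :
    Function.Surjective (qTrivialHom h) := by
  rw [← AlgHom.range_eq_top, eq_top_iff, ← adjoin_range_bxQ, Algebra.adjoin_le_iff]
  rintro _ ⟨j, rfl⟩
  have hj : bxQ n A j ∈ (Submodule.span ℚ (Set.range (cy n))).map (qTrivialHom h).toLinearMap := by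
    rw [map_span_range_cy h]
    exact Submodule.subset_span ⟨j, rfl⟩
  obtain ⟨y, -, hy⟩ := hj
  exact ⟨y, hy⟩

theorem qTrivialHom_injective (h : ∀ j, balpha n A j ^ 2 = 0) :
    Function.Injective (qTrivialHom h) := by
  let f := (qTrivialHom h).toLinearMap
  have hsurj : Function.Surjective f := qTrivialHom_surjective h
  have : Module.Finite ℚ (BottRingQ n A) := Module.Finite.of_surjective f hsurj
  have hli : LinearIndependent ℚ fun S : Finset (Fin n) =>
      (Ideal.Quotient.mk (bottIdealQ n A) (∏ i ∈ S, X i) : BottRingQ n A) :=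
    linearIndependent_mk_prod_X <| Ideal.span_le.2 <| by
      rintro _ ⟨j, rfl⟩
      exact aevalBottMulX_relation (a := fun i j => (A i j : ℚ)) j
  have card_le : Fintype.card (Finset (Fin n)) ≤ Module.finrank ℚ (BottRingQ n A) :=
    hli.fintype_card_le_finrank
  have finrank_le : Module.finrank ℚ (BottRingQ n A) ≤ Module.finrank ℚ (CPRing n) := by
    rw [← finrank_top ℚ, ← LinearMap.range_eq_top.2 hsurj]
    exact f.finrank_range_le
  exact (LinearMap.injective_iff_surjective_of_finrank_eq_finrank
    (finrank_CPRing_le_card.trans card_le |>.antisymm finrank_le)).2 hsurj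

end Bott

theorem Q_trivial_of_alpha_sq_zero_general (n : ℕ) (A : Fin n → Fin n → ℤ)
    (h : ∀ j : Fin n, balpha n A j ^ 2 = 0) :
    ∃ φ : CPRing n ≃+* BottRingQ n A,
      (∀ j : Fin n, φ (cy n j) = bxQ n A j - (1 / 2 : ℚ) • balphaQ n A j) ∧
      φ '' (Submodule.span ℚ (Set.range (cy n)) : Set (CPRing n))
        = (Submodule.span ℚ (Set.range (bxQ n A)) : Set (BottRingQ n A)) := by
  refine ⟨(AlgEquiv.ofBijective (qTrivialHom h)
    ⟨qTrivialHom_injective h, qTrivialHom_surjective h⟩).toRingEquiv, qTrivialHom_cy h, ?_⟩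
  rw [← map_span_range_cy h, Submodule.map_coe]
  rfl

theorem Q_trivial_of_alpha_sq_zero (n : ℕ) (hn : 1 ≤ n) (A : Fin n → Fin n → ℤ)
    (h : ∀ j : Fin n, balpha n A j ^ 2 = 0) :
    ∃ φ : CPRing n ≃+* BottRingQ n A,
      (∀ j : Fin n, φ (cy n j) = bxQ n A j - (1 / 2 : ℚ) • balphaQ n A j) ∧
      φ '' (Submodule.span ℚ (Set.range (cy n)) : Set (CPRing n))
        = (Submodule.span ℚ (Set.range (bxQ n A)) : Set (BottRingQ n A)) :=
  Q_trivial_of_alpha_sq_zero_general n A h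

end
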